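/- Let T₁, T_d > 0, assume U''(s) > 0 for all s ∈ ℝ, and let A be the 2d×2d real matrix with entries a_{d+1,d+1} = √T₁, a_{2d,2d} = √T_d, and a_{ij} = 0 otherwise. Then the pair (b, A) satisfies Hörmander's condition at every point x ∈ ℝ^{2d}: there exists n = n(x) ∈ ℕ such that the columns of the matrices A, B₁(x)A, B₂(x)A, …, B_n(x)A together span ℝ^{2d}, i.e., Rank[A, B₁(x)A, …, B_n(x)A] = 2d. -/

import Mathlib

open scoped BigOperators
open Matrix

noncomputable section

abbrev EE (d : ℕ) : Type := Fin (2 * d) → ℝ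

/-- The Hamiltonian on `ℝ^{2d}`, where coordinates `0,…,d-1` are `z₁,…,z_d` and
coordinates `d,…,2d-1` are `u₁,…,u_d`. -/
noncomputable def hamE (d : ℕ) (V U : ℝ → ℝ) (x : EE d) : ℝ :=
  (∑ i : Fin d,
      ((x ⟨d + i.1, by have := i.2; omega⟩) ^ 2 / 2 + V (x ⟨i.1, by have := i.2; omega⟩))) +
    ∑ i : Fin (d - 1),
      U (x ⟨i.1 + 1, by have := i.2; omega⟩ - x ⟨i.1, by have := i.2; omega⟩)

/-- The drift `b(z,u) = (u₁,…,u_d, -(∂_{z₁}H + γ₁u₁), -∂_{z₂}H, …, -∂_{z_{d-1}}H,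
-(∂_{z_d}H + γ_d u_d))` on `ℝ^{2d}`. -/
noncomputable def driftE (d : ℕ) (γ₁ γd : ℝ) (V U : ℝ → ℝ) (x : EE d) : EE d := fun i =>
  if h : i.1 < d then x ⟨d + i.1, by omega⟩
  else
    -(fderiv ℝ (hamE d V U) x (Pi.single (⟨i.1 - d, by have := i.2; omega⟩ : Fin (2 * d)) 1))
      - (if i.1 = d then γ₁ * x i else 0)
      - (if i.1 = 2 * d - 1 then γd * x i else 0)

/-- The Jacobian matrix `∇b(x) = (∂_j b^i(x))_{ij}`. -/
noncomputable def jacE (d : ℕ) (b : EE d → EE d) (x : EE d) : Matrix (Fin (2 * d)) (Fin (2 * d)) ℝ :=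
  Matrix.of fun i j => fderiv ℝ (fun y => b y i) x (Pi.single j 1)

/-- `BmatE d b n` is the matrix `B_{n+1}`: `B₁(x) = ∇b(x)` and
`B_{n+1}(x) = (b(x)·∇)B_n(x) - ∇b(x)·B_n(x)`. -/
noncomputable def BmatE (d : ℕ) (b : EE d → EE d) : ℕ → EE d → Matrix (Fin (2 * d)) (Fin (2 * d)) ℝ
  | 0 => jacE d b
  | n + 1 => fun x =>
      (Matrix.of fun i j => fderiv ℝ (fun y => BmatE d b n y i j) x (b x)) -
        jacE d b x * BmatE d b n x

/-- The matrix `A` with `a_{d+1,d+1} = √T₁`, `a_{2d,2d} = √T_d` (1-based indexing)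
and all other entries zero. -/
noncomputable def matA (d : ℕ) (T₁ Td : ℝ) : Matrix (Fin (2 * d)) (Fin (2 * d)) ℝ :=
  Matrix.of fun i j =>
    if i.1 = d ∧ j.1 = d then Real.sqrt T₁
    else if i.1 = 2 * d - 1 ∧ j.1 = 2 * d - 1 then Real.sqrt Td
    else 0

/-! Write `w_n` for the column of `B_{n+1}(x)` belonging to `u₁`; it obeys
`w_{n+1} = (b·∇) w_n - ∇b · w_n`. Rank the coordinates in the order `u₁, z₁, u₂, z₂, …`
(`coordRank`). Row `z_k` of `∇b` only sees `u_k`, and row `u_k` only sees `z_{k-1}, z_k, z_{k+1}`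
and `u_k`, so multiplying by `∇b` raises the rank of the support by at most one. Hence `w_n` is
supported on ranks `≤ n + 1`, and its entry of rank `n + 1` is, up to sign, the product of the
`U''(z_{i+1} - z_i)`, which does not vanish. Together with the column `√T₁ e_{u₁}` of `A` these
columns form a triangular family, so they span `ℝ^{2d}`. -/

theorem Submodule.eq_top_of_triangular {𝕜 ι : Type*} [Field 𝕜] [Fintype ι] [DecidableEq ι]
    (K : Submodule 𝕜 (ι → 𝕜)) (r : ι → ℕ) (hr : Function.Injective r)
    (h : ∀ t, ∃ v ∈ K, v t ≠ 0 ∧ ∀ i, r t < r i → v i = 0) : K = ⊤ := by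
  have single_mem : ∀ n t, r t = n → Pi.single t (1 : 𝕜) ∈ K := by
    intro n
    induction n using Nat.strong_induction_on with
    | _ n ih =>
      rintro t rfl
      obtain ⟨v, hvK, hvt, hv⟩ := h t
      rw [← Submodule.smul_mem_iff K hvt]
      have hvt_single : v t • Pi.single t (1 : 𝕜)
          = v - ∑ i ∈ Finset.univ.erase t, v i • Pi.single i 1 := by
        rw [Finset.sum_erase_eq_sub (Finset.mem_univ t), ← pi_eq_sum_univ' v]; abel
      rw [hvt_single]
      refine K.sub_mem hvK (K.sum_mem fun i hi => ?_)
      rcases lt_trichotomy (r i) (r t) with hlt | heq | hgt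
      · exact K.smul_mem _ (ih _ hlt i rfl)
      · exact absurd (hr heq) (Finset.ne_of_mem_erase hi)
      · simp [hv i hgt]
  rw [eq_top_iff, ← (Pi.basisFun 𝕜 ι).span_eq, Submodule.span_le]
  rintro _ ⟨i, rfl⟩
  simpa using single_mem _ i rfl

theorem Fin.sum_ite_val_eq {M : Type*} [AddCommMonoid M] {n : ℕ} (k : ℕ) (f : Fin n → M) :
    ∑ i : Fin n, (if i.1 = k then f i else 0) = if h : k < n then f ⟨k, h⟩ else 0 := by
  split_ifs with h
  · rw [Fintype.sum_eq_single ⟨k, h⟩ fun i hi => if_neg fun hik => hi (Fin.ext hik)]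
    simp
  · exact Finset.sum_eq_zero fun i _ => if_neg (by omega)

theorem hasFDerivAt_ite_zero {𝕜 E F : Type*} [NontriviallyNormedField 𝕜]
    [NormedAddCommGroup E] [NormedSpace 𝕜 E] [NormedAddCommGroup F] [NormedSpace 𝕜 F]
    {p : Prop} [Decidable p] {f : E → F} {f' : E →L[𝕜] F} {x : E} (h : p → HasFDerivAt f f' x) :
    HasFDerivAt (fun y => if p then f y else 0) (if p then f' else 0) x := by
  split_ifs with hp
  exacts [h hp, hasFDerivAt_const 0 x]

theorem BmatE_succ_apply {d : ℕ} (b : EE d → EE d) (n : ℕ) (y : EE d) (i j : Fin (2 * d)) :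
    BmatE d b (n + 1) y i j = fderiv ℝ (fun y' => BmatE d b n y' i j) y (b y)
      - fderiv ℝ (fun y' => b y' i) y (fun k => BmatE d b n y k j) := by
  simp only [BmatE, jacE, Matrix.sub_apply, Matrix.of_apply, Matrix.mul_apply]
  conv_rhs => rw [pi_eq_sum_univ' (fun k => BmatE d b n y k j)]
  simp [mul_comm]

variable {d : ℕ} {V U : ℝ → ℝ}

theorem fderiv_hamE_apply (hV : Differentiable ℝ V) (hU : Differentiable ℝ U) (x v : EE d) :
    fderiv ℝ (hamE d V U) x v =
      (∑ i : Fin d, (x ⟨d + i.1, by omega⟩ * v ⟨d + i.1, by omega⟩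
        + deriv V (x ⟨i.1, by omega⟩) * v ⟨i.1, by omega⟩)) +
      ∑ i : Fin (d - 1), deriv U (x ⟨i.1 + 1, by omega⟩ - x ⟨i.1, by omega⟩) *
        (v ⟨i.1 + 1, by omega⟩ - v ⟨i.1, by omega⟩) := by
  have h : HasFDerivAt (hamE d V U) _ x :=
    (HasFDerivAt.fun_sum (u := Finset.univ) fun (i : Fin d) _ =>
    (((hasDerivAt_pow 2 _).div_const 2).comp_hasFDerivAt x
      (hasFDerivAt_apply (𝕜 := ℝ) (⟨d + i.1, by omega⟩ : Fin (2 * d)) x)).add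
    ((hV _).hasDerivAt.comp_hasFDerivAt x
      (hasFDerivAt_apply (𝕜 := ℝ) (⟨i.1, by omega⟩ : Fin (2 * d)) x))).add
    (HasFDerivAt.fun_sum (u := Finset.univ) fun (i : Fin (d - 1)) _ =>
      (hU _).hasDerivAt.comp_hasFDerivAt x
        ((hasFDerivAt_apply (𝕜 := ℝ) (⟨i.1 + 1, by omega⟩ : Fin (2 * d)) x).sub
          (hasFDerivAt_apply (𝕜 := ℝ) (⟨i.1, by omega⟩ : Fin (2 * d)) x)))
  rw [h.fderiv]
  simp

theorem fderiv_hamE_single (hV : Differentiable ℝ V) (hU : Differentiable ℝ U) (x : EE d)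
    (k : ℕ) (hk : k < d) :
    fderiv ℝ (hamE d V U) x (Pi.single ⟨k, by omega⟩ 1) =
      deriv V (x ⟨k, by omega⟩)
        + (if 1 ≤ k then deriv U (x ⟨k, by omega⟩ - x ⟨k - 1, by omega⟩) else 0)
        - (if k + 1 < d then deriv U (x ⟨k + 1, by omega⟩ - x ⟨k, by omega⟩) else 0) := by
  have hu : ∀ i : Fin d, ¬ d + i.1 = k := fun i => by omega
  rw [fderiv_hamE_apply hV hU]
  rcases k with _ | k
  · simp [Pi.single_apply, Fin.ext_iff, hk.ne', Fin.sum_ite_val_eq, hk]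
    split_ifs <;> first | omega | ring
  · simp [Pi.single_apply, Fin.ext_iff, mul_sub, Finset.sum_sub_distrib, hu, Fin.sum_ite_val_eq,
      show k < d - 1 by omega, show k + 1 < d - 1 ↔ k + 1 + 1 < d by omega, hk]
    split_ifs <;> first | omega | ring

def frictionCoeff (d : ℕ) (γ₁ γd : ℝ) (k : ℕ) : ℝ :=
  (if k = 0 then γ₁ else 0) + (if k = d - 1 then γd else 0)

variable {γ₁ γd : ℝ}

theorem driftE_apply_z (x : EE d) (k : ℕ) (hk : k < d) :
    driftE d γ₁ γd V U x ⟨k, by omega⟩ = x ⟨d + k, by omega⟩ := by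
  simp [driftE, hk]

theorem driftE_apply_u (hV : Differentiable ℝ V) (hU : Differentiable ℝ U) (x : EE d)
    (k : ℕ) (hk : k < d) :
    driftE d γ₁ γd V U x ⟨d + k, by omega⟩ =
      -(deriv V (x ⟨k, by omega⟩)
        + (if 1 ≤ k then deriv U (x ⟨k, by omega⟩ - x ⟨k - 1, by omega⟩) else 0)
        - (if k + 1 < d then deriv U (x ⟨k + 1, by omega⟩ - x ⟨k, by omega⟩) else 0))
      - frictionCoeff d γ₁ γd k * x ⟨d + k, by omega⟩ := by
  have hsub : (⟨d + k - d, by omega⟩ : Fin (2 * d)) = ⟨k, by omega⟩ := by simp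
  simp only [driftE, show ¬ d + k < d by omega, dif_neg, not_false_eq_true, hsub,
    fderiv_hamE_single hV hU x k hk, frictionCoeff]
  have h1 : d + k = d ↔ k = 0 := by omega
  have h2 : d + k = 2 * d - 1 ↔ k = d - 1 := by omega
  simp only [h1, h2]
  split_ifs <;> ring

theorem fderiv_driftE_z (y v : EE d) (k : ℕ) (hk : k < d) :
    fderiv ℝ (fun y => driftE d γ₁ γd V U y ⟨k, by omega⟩) y v = v ⟨d + k, by omega⟩ := by
  simp_rw [driftE_apply_z _ k hk]
  rw [(hasFDerivAt_apply _ y).fderiv]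
  rfl

theorem fderiv_driftE_u (hV : ContDiff ℝ 2 V) (hU : ContDiff ℝ 2 U) (y v : EE d)
    (k : ℕ) (hk : k < d) :
    fderiv ℝ (fun y => driftE d γ₁ γd V U y ⟨d + k, by omega⟩) y v =
      -(deriv (deriv V) (y ⟨k, by omega⟩) * v ⟨k, by omega⟩
        + (if 1 ≤ k then deriv (deriv U) (y ⟨k, by omega⟩ - y ⟨k - 1, by omega⟩) *
            (v ⟨k, by omega⟩ - v ⟨k - 1, by omega⟩) else 0)
        - (if k + 1 < d then deriv (deriv U) (y ⟨k + 1, by omega⟩ - y ⟨k, by omega⟩) *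
            (v ⟨k + 1, by omega⟩ - v ⟨k, by omega⟩) else 0))
      - frictionCoeff d γ₁ γd k * v ⟨d + k, by omega⟩ := by
  have hV' := hV.differentiable_deriv_two
  have hU' := hU.differentiable_deriv_two
  simp_rw [driftE_apply_u (hV.differentiable two_ne_zero) (hU.differentiable two_ne_zero) _ k hk]
  have h : HasFDerivAt (fun y : EE d =>
      -(deriv V (y ⟨k, by omega⟩)
        + (if 1 ≤ k then deriv U (y ⟨k, by omega⟩ - y ⟨k - 1, by omega⟩) else 0)
        - (if k + 1 < d then deriv U (y ⟨k + 1, by omega⟩ - y ⟨k, by omega⟩) else 0))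
      - frictionCoeff d γ₁ γd k * y ⟨d + k, by omega⟩) _ y :=
    ((((hV' _).hasDerivAt.comp_hasFDerivAt y (hasFDerivAt_apply _ y)).add
      (hasFDerivAt_ite_zero fun _ => (hU' _).hasDerivAt.comp_hasFDerivAt y
        ((hasFDerivAt_apply _ y).sub (hasFDerivAt_apply _ y)))).sub
      (hasFDerivAt_ite_zero fun _ => (hU' _).hasDerivAt.comp_hasFDerivAt y
        ((hasFDerivAt_apply _ y).sub (hasFDerivAt_apply _ y)))).neg.sub
      ((hasFDerivAt_apply (𝕜 := ℝ) ⟨d + k, by omega⟩ y).const_mul _)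
  rw [h.fderiv]
  simp [apply_ite (fun L : EE d →L[ℝ] ℝ => L v)]

def coordRank (i : Fin (2 * d)) : ℕ := if i.1 < d then 2 * i.1 + 1 else 2 * (i.1 - d)

theorem coordRank_injective : Function.Injective (coordRank (d := d)) := by
  intro i j h
  simp only [coordRank] at h
  ext
  split_ifs at h <;> omega

theorem coordRank_lt (i : Fin (2 * d)) : coordRank i < 2 * d := by
  have := i.2
  simp only [coordRank]
  split_ifs <;> omega

theorem fderiv_driftE_eq_zero_of_rank (hV : ContDiff ℝ 2 V) (hU : ContDiff ℝ 2 U)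
    {m : ℕ} {v : EE d} (hv : ∀ i, m < coordRank i → v i = 0) (y : EE d) (i : Fin (2 * d))
    (hi : m + 1 < coordRank i) :
    fderiv ℝ (fun y => driftE d γ₁ γd V U y i) y v = 0 := by
  obtain ⟨i, hi2⟩ := i
  by_cases hid : i < d
  · simp only [coordRank, hid, if_true] at hi
    rw [fderiv_driftE_z y v i hid]
    exact hv _ (by simp only [coordRank]; split_ifs <;> omega)
  · obtain ⟨k, rfl⟩ := Nat.exists_eq_add_of_le (not_lt.1 hid)
    simp only [coordRank, hid, if_false, Nat.add_sub_cancel_left] at hi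
    rw [fderiv_driftE_u hV hU y v k (by omega)]
    simp (disch := simp only [coordRank]; split_ifs <;> omega) only [hv]
    split_ifs <;> simp

theorem fderiv_driftE_u_succ_of_rank (hV : ContDiff ℝ 2 V) (hU : ContDiff ℝ 2 U)
    {k : ℕ} (hk : k + 1 < d) {v : EE d} (hv : ∀ i, 2 * k + 1 < coordRank i → v i = 0)
    (y : EE d) :
    fderiv ℝ (fun y => driftE d γ₁ γd V U y ⟨d + (k + 1), by omega⟩) y v =
      deriv (deriv U) (y ⟨k + 1, by omega⟩ - y ⟨k, by omega⟩) * v ⟨k, by omega⟩ := by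
  have hz : v ⟨k + 1, by omega⟩ = 0 := hv _ (by simp [coordRank, hk])
  have hu : v ⟨d + (k + 1), by omega⟩ = 0 := hv _ (by simp [coordRank]; omega)
  rw [fderiv_driftE_u hV hU y v (k + 1) hk, hz, hu, if_pos (Nat.le_add_left 1 k)]
  split_ifs with hk'
  · rw [hv ⟨k + 1 + 1, by omega⟩ (by simp [coordRank, hk'])]
    simp
  · simp

theorem BmatE_driftE_eq_zero (hV : ContDiff ℝ 2 V) (hU : ContDiff ℝ 2 U) (n : ℕ) (y : EE d)
    {i j : Fin (2 * d)} (h : coordRank j + n + 1 < coordRank i) :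
    BmatE d (driftE d γ₁ γd V U) n y i j = 0 := by
  induction n generalizing y i with
  | zero =>
    refine fderiv_driftE_eq_zero_of_rank hV hU (m := coordRank j) (fun i' hi' => ?_) y i h
    exact Pi.single_eq_of_ne (fun hij => by rw [hij] at hi'; omega) _
  | succ n ih =>
    have hconst : (fun y' => BmatE d (driftE d γ₁ γd V U) n y' i j) = fun _ => 0 :=
      funext fun y' => ih y' (by omega)
    rw [BmatE_succ_apply, hconst, fderiv_const_apply, fderiv_driftE_eq_zero_of_rank hV hU
      (fun i' hi' => ih y hi') y i (by omega)]
    simp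

theorem BmatE_driftE_succ_of_rank (hV : ContDiff ℝ 2 V) (hU : ContDiff ℝ 2 U) (n : ℕ)
    (y : EE d) {i j : Fin (2 * d)} (h : coordRank j + n + 1 < coordRank i) :
    BmatE d (driftE d γ₁ γd V U) (n + 1) y i j =
      -fderiv ℝ (fun y => driftE d γ₁ γd V U y i) y
        (fun k => BmatE d (driftE d γ₁ γd V U) n y k j) := by
  have hconst : (fun y' => BmatE d (driftE d γ₁ γd V U) n y' i j) = fun _ => 0 :=
    funext fun y' => BmatE_driftE_eq_zero hV hU n y' h
  rw [BmatE_succ_apply, hconst, fderiv_const_apply]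
  simp

theorem BmatE_driftE_sign (hV : ContDiff ℝ 2 V) (hU : ContDiff ℝ 2 U)
    (hU'' : ∀ s, 0 < deriv (deriv U) s) {j : Fin (2 * d)} (hj : j.1 = d) (y : EE d) (k : ℕ) :
    (∀ hk : k < d, 0 < BmatE d (driftE d γ₁ γd V U) (2 * k) y ⟨k, by omega⟩ j) ∧
      (∀ hk : k + 1 < d,
        BmatE d (driftE d γ₁ γd V U) (2 * k + 1) y ⟨d + (k + 1), by omega⟩ j < 0) := by
  have hj0 : coordRank j = 0 := by simp [coordRank, hj]
  have hodd : ∀ (k : ℕ) (hk : k + 1 < d),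
      0 < BmatE d (driftE d γ₁ γd V U) (2 * k) y ⟨k, by omega⟩ j →
      BmatE d (driftE d γ₁ γd V U) (2 * k + 1) y ⟨d + (k + 1), by omega⟩ j < 0 := by
    intro k hk hpos
    rw [BmatE_driftE_succ_of_rank hV hU _ _ (by rw [hj0]; simp [coordRank]; omega),
      fderiv_driftE_u_succ_of_rank hV hU hk
        (fun i hi => BmatE_driftE_eq_zero hV hU _ _ (by omega))]
    exact neg_neg_of_pos (mul_pos (hU'' _) hpos)
  induction k with
  | zero =>
    refine ⟨fun hk => ?_, fun hk => hodd 0 hk ?_⟩ <;>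
    · simp only [BmatE, jacE, Matrix.of_apply, fderiv_driftE_z y _ 0 (by omega)]
      simp [Pi.single_apply, Fin.ext_iff, hj]
  | succ k ih =>
    have heven : ∀ hk : k + 1 < d,
        0 < BmatE d (driftE d γ₁ γd V U) (2 * (k + 1)) y ⟨k + 1, by omega⟩ j := by
      intro hk
      rw [show 2 * (k + 1) = 2 * k + 1 + 1 by ring,
        BmatE_driftE_succ_of_rank hV hU _ _ (by rw [hj0]; simp [coordRank, hk]; omega),
        fderiv_driftE_z y _ (k + 1) hk]
      exact neg_pos_of_neg (ih.2 hk)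
    exact ⟨heven, fun hk => hodd (k + 1) hk (heven (by omega))⟩

theorem BmatE_driftE_ne_zero_of_rank (hV : ContDiff ℝ 2 V) (hU : ContDiff ℝ 2 U)
    (hU'' : ∀ s, 0 < deriv (deriv U) s) {j : Fin (2 * d)} (hj : j.1 = d) (y : EE d) {n : ℕ}
    {i : Fin (2 * d)} (hi : coordRank i = n + 1) :
    BmatE d (driftE d γ₁ γd V U) n y i j ≠ 0 := by
  obtain ⟨i, hi2⟩ := i
  simp only [coordRank] at hi
  split_ifs at hi with hid
  · obtain rfl : n = 2 * i := by omega
    exact ((BmatE_driftE_sign hV hU hU'' hj y i).1 hid).ne'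
  · obtain ⟨k, rfl⟩ : ∃ k, i = d + (k + 1) := ⟨i - d - 1, by omega⟩
    obtain rfl : n = 2 * k + 1 := by omega
    exact ((BmatE_driftE_sign hV hU hU'' hj y k).2 (by omega)).ne

theorem mul_matA_apply_of_val_eq (M : Matrix (Fin (2 * d)) (Fin (2 * d)) ℝ) (T₁ Td : ℝ)
    (i : Fin (2 * d)) {j : Fin (2 * d)} (hj : j.1 = d) :
    (M * matA d T₁ Td) i j = M i j * Real.sqrt T₁ := by
  rw [Matrix.mul_apply, Fintype.sum_eq_single j fun k hk => ?_]
  · simp [matA, hj]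
  · have hk' : k.1 ≠ d := fun h => hk (Fin.ext (h.trans hj.symm))
    simp only [matA, Matrix.of_apply, hj, hk', false_and, if_false]
    split_ifs with h
    · omega
    · simp

theorem stmt17_general (d : ℕ) (γ₁ γd : ℝ) (V U : ℝ → ℝ)
    (hV : ContDiff ℝ (⊤ : ℕ∞) V) (hU : ContDiff ℝ (⊤ : ℕ∞) U)
    (hU'' : ∀ s : ℝ, 0 < deriv (deriv U) s)
    (T₁ Td : ℝ) (hT₁ : 0 < T₁) :
    ∀ x : EE d, ∃ n : ℕ,
      Submodule.span ℝ
          (Set.range (matA d T₁ Td)ᵀ ∪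
            ⋃ m : Fin n, Set.range (BmatE d (driftE d γ₁ γd V U) m.1 x * matA d T₁ Td)ᵀ) =
        (⊤ : Submodule ℝ (EE d)) := by
  intro x
  have hV2 : ContDiff ℝ 2 V := contDiff_infty.1 hV 2
  have hU2 : ContDiff ℝ 2 U := contDiff_infty.1 hU 2
  refine ⟨2 * d - 1, Submodule.eq_top_of_triangular _ coordRank coordRank_injective fun t => ?_⟩
  let u₀ : Fin (2 * d) := ⟨d, by have := t.2; omega⟩
  have hu₀ : coordRank u₀ = 0 := by simp [u₀, coordRank]
  have hcol (M : Matrix (Fin (2 * d)) (Fin (2 * d)) ℝ) (i : Fin (2 * d)) :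
      (M * matA d T₁ Td)ᵀ u₀ i = M i u₀ * Real.sqrt T₁ :=
    mul_matA_apply_of_val_eq M T₁ Td i rfl
  have hsqrt : Real.sqrt T₁ ≠ 0 := (Real.sqrt_pos.2 hT₁).ne'
  obtain ht | ⟨n, hn⟩ : coordRank t = 0 ∨ ∃ n, coordRank t = n + 1 :=
    (coordRank t).eq_zero_or_eq_succ_pred.imp id fun h => ⟨_, h⟩
  · rw [coordRank_injective (ht.trans hu₀.symm)]
    refine ⟨(matA d T₁ Td)ᵀ u₀, Submodule.subset_span (Or.inl ⟨u₀, rfl⟩), ?_, fun i hi => ?_⟩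
    all_goals rw [← one_mul (matA d T₁ Td), hcol]
    · simpa using hsqrt
    · simp [Matrix.one_apply_ne (fun h : i = u₀ => by rw [h] at hi; omega)]
  · refine ⟨(BmatE d (driftE d γ₁ γd V U) n x * matA d T₁ Td)ᵀ u₀,
      Submodule.subset_span (Or.inr (Set.mem_iUnion.2
        ⟨⟨n, by have := coordRank_lt t; omega⟩, u₀, rfl⟩)), ?_, fun i hi => ?_⟩
    all_goals rw [hcol]
    · exact mul_ne_zero (BmatE_driftE_ne_zero_of_rank hV2 hU2 hU'' rfl x hn) hsqrt
    · rw [BmatE_driftE_eq_zero hV2 hU2 n x (by omega), zero_mul]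

theorem stmt17 (d : ℕ) (hd : 3 ≤ d) (γ₁ γd : ℝ) (V U : ℝ → ℝ)
    (hV : ContDiff ℝ (⊤ : ℕ∞) V) (hU : ContDiff ℝ (⊤ : ℕ∞) U)
    (hU'' : ∀ s : ℝ, 0 < deriv (deriv U) s)
    (T₁ Td : ℝ) (hT₁ : 0 < T₁) (hTd : 0 < Td) :
    ∀ x : EE d, ∃ n : ℕ,
      Submodule.span ℝ
          (Set.range (matA d T₁ Td)ᵀ ∪
            ⋃ m : Fin n, Set.range (BmatE d (driftE d γ₁ γd V U) m.1 x * matA d T₁ Td)ᵀ) =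
        (⊤ : Submodule ℝ (EE d)) :=
  stmt17_general d γ₁ γd V U hV hU hU'' T₁ Td hT₁
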